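/- arXiv:0709.0905 — 3 statements merged into one kernel-verified Lean document; each statement's English description precedes it below -/
import Mathlib

section
/- Suppose M : [0,T) → ℝ is locally Lipschitz, M(0) > 0, and for a.e. t: M'(t) ≥ (7ε/4)·M(t)² − K, where K > 0 and ε > 0 satisfy (7ε/4)·M(0)² − K ≥ (ε/4)·M(0)², i.e., (3ε/2)·M(0)² ≥ K. Then M is nondecreasing and satisfies M'(t) ≥ (ε/4)·M(t)² for a.e. t on [0,T). -/
/-!
Since `(7/4)·(13/14)² > 3/2`, we have `(7ε/4)·m² − K ≥ 0` as soon as `m ≥ (13/14)·M(0)`, so the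
derivative of `M` is a.e. nonnegative wherever `M` lies above that level. A function that is
absolutely continuous (in particular, Lipschitz) cannot cross the level downwards from `M(0)`
without decreasing on a set of positive measure, so `M ≥ M(0)` and `M` is nondecreasing. Then
`K ≤ (3ε/2)·M(0)² ≤ (3ε/2)·M²` turns the hypothesis into `M' ≥ (ε/4)·M²`.
-/

open MeasureTheory Filter Set Topology

namespace AbsolutelyContinuousOnInterval

variable {f : ℝ → ℝ} {a b c : ℝ}

theorem le_of_ae_deriv_nonneg (hf : AbsolutelyContinuousOnInterval f a b) (hab : a ≤ b)
    (hderiv : ∀ᵐ t, t ∈ Icc a b → 0 ≤ deriv f t) : f a ≤ f b := by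
  rw [← sub_nonneg, ← hf.integral_deriv_eq_sub]
  exact intervalIntegral.integral_nonneg_of_ae_restrict hab
    ((ae_restrict_iff' measurableSet_Icc).2 hderiv)

theorem monotoneOn_of_ae_deriv_nonneg (hf : AbsolutelyContinuousOnInterval f a b)
    (hderiv : ∀ᵐ t, t ∈ Icc a b → 0 ≤ deriv f t) : MonotoneOn f (Icc a b) := by
  intro x hx y hy hxy
  refine (hf.mono ?_).le_of_ae_deriv_nonneg hxy ?_
  · rw [uIcc_of_le hxy]
    exact (Icc_subset_Icc hx.1 hy.2).trans Icc_subset_uIcc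
  · filter_upwards [hderiv] with t ht htxy
    exact ht ⟨hx.1.trans htxy.1, htxy.2.trans hy.2⟩

theorem le_of_ae_deriv_nonneg_of_lt (hf : AbsolutelyContinuousOnInterval f a b)
    (hderiv : ∀ᵐ t, t ∈ Icc a b → c < f t → 0 ≤ deriv f t) (hfa : c < f a) :
    ∀ y ∈ Icc a b, f a ≤ f y := by
  have hcont : ContinuousOn f (Icc a b) := hf.continuousOn.mono Icc_subset_uIcc
  have hclosed : IsClosed ({y | f a ≤ f y} ∩ Icc a b) := by
    rw [inter_comm]
    exact hcont.preimage_isClosed_of_isClosed isClosed_Icc isClosed_Ici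
  refine hclosed.Icc_subset_of_forall_mem_nhdsGT_of_Icc_subset (le_refl (f a)) fun t ht hat => ?_
  have hft : c < f t := hfa.trans_le (hat ⟨ht.1, le_rfl⟩)
  have hnear : {z | c < f z ∧ z ∈ Icc t b} ∈ 𝓝[≥] t := by
    rw [← nhdsWithin_Icc_eq_nhdsGE ht.2]
    exact ((hcont.mono (Icc_subset_Icc_left ht.1)) t ⟨le_rfl, ht.2.le⟩ |>.eventually
      (lt_mem_nhds hft)).and self_mem_nhdsWithin
  obtain ⟨u, htu, hu⟩ := (mem_nhdsGE_iff_exists_Ico_subset' ht.2).1 hnear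
  refine mem_of_superset (Ioo_mem_nhdsGT htu) fun z hz => ?_
  have hIcc : Icc t z ⊆ Ico t u := Icc_subset_Ico_right hz.2
  have htz : Icc t z ⊆ Icc a b := fun s hs => ⟨ht.1.trans hs.1, (hu (hIcc hs)).2.2⟩
  have hmono : f t ≤ f z := by
    refine (hf.mono ?_).le_of_ae_deriv_nonneg hz.1.le ?_
    · rw [uIcc_of_le hz.1.le]
      exact htz.trans Icc_subset_uIcc
    · filter_upwards [hderiv] with s hs hsI
      exact hs (htz hsI) (hu (hIcc hsI)).1
  exact (hat ⟨ht.1, le_rfl⟩).trans hmono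

theorem monotoneOn_of_ae_deriv_nonneg_of_lt (hf : AbsolutelyContinuousOnInterval f a b)
    (hderiv : ∀ᵐ t, t ∈ Icc a b → c < f t → 0 ≤ deriv f t) (hfa : c < f a) :
    MonotoneOn f (Icc a b) := by
  refine hf.monotoneOn_of_ae_deriv_nonneg ?_
  filter_upwards [hderiv] with t ht htI
  exact ht htI (hfa.trans_le (hf.le_of_ae_deriv_nonneg_of_lt hderiv hfa t htI))

end AbsolutelyContinuousOnInterval

theorem riccati_propagation_general (ε K T : ℝ) (hε : 0 < ε)
    (M : ℝ → ℝ)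
    (hlip : ∀ S : Set ℝ, IsCompact S → S ⊆ Set.Ico 0 T → ∃ L : NNReal, LipschitzOnWith L M S)
    (hM0 : 0 < M 0)
    (hinit : K ≤ (3 * ε / 2) * (M 0) ^ 2)
    (hineq : ∀ᵐ t ∂(volume.restrict (Set.Ico 0 T)),
      DifferentiableAt ℝ M t ∧ (7 * ε / 4) * (M t) ^ 2 - K ≤ deriv M t) :
    MonotoneOn M (Set.Ico 0 T) ∧
    (∀ᵐ t ∂(volume.restrict (Set.Ico 0 T)), (ε / 4) * (M t) ^ 2 ≤ deriv M t) := by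
  have hineq' := (ae_restrict_iff' measurableSet_Ico).1 hineq
  have hmono : ∀ t ∈ Ico 0 T, MonotoneOn M (Icc 0 t) := by
    intro t ht
    obtain ⟨L, hL⟩ := hlip (Icc 0 t) isCompact_Icc (Icc_subset_Ico_right ht.2)
    refine (uIcc_of_le ht.1 ▸ hL).absolutelyContinuousOnInterval
      |>.monotoneOn_of_ae_deriv_nonneg_of_lt (c := 13 / 14 * M 0) ?_ (by linarith)
    filter_upwards [hineq'] with s hs hsI hMs
    have hM0s : (13 / 14 * M 0) ^ 2 ≤ M s ^ 2 := pow_le_pow_left₀ (by positivity) hMs.le 2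
    nlinarith [(hs (Icc_subset_Ico_right ht.2 hsI)).2]
  have hge : ∀ t ∈ Ico 0 T, M 0 ≤ M t := fun t ht =>
    hmono t ht ⟨le_rfl, ht.1⟩ ⟨ht.1, le_rfl⟩ ht.1
  refine ⟨fun x hx y hy hxy => hmono y hy ⟨hx.1, hxy⟩ ⟨hx.1.trans hxy, le_rfl⟩ hxy, ?_⟩
  filter_upwards [hineq, ae_restrict_mem measurableSet_Ico] with t ht htI
  have hM0t : M 0 ^ 2 ≤ M t ^ 2 := pow_le_pow_left₀ hM0.le (hge t htI) 2
  nlinarith [ht.2]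

/-- If M' ≥ (7ε/4)M² − K a.e. with M(0) > 0 and (3ε/2)M(0)² ≥ K, then M is
    nondecreasing on [0,T) and M' ≥ (ε/4)M² a.e. there. -/
theorem riccati_propagation (ε K T : ℝ) (hε : 0 < ε) (hK : 0 < K) (hT : 0 < T)
    (M : ℝ → ℝ)
    (hlip : ∀ S : Set ℝ, IsCompact S → S ⊆ Set.Ico 0 T → ∃ L : NNReal, LipschitzOnWith L M S)
    (hM0 : 0 < M 0)
    (hinit : K ≤ (3 * ε / 2) * (M 0) ^ 2)
    (hineq : ∀ᵐ t ∂(volume.restrict (Set.Ico 0 T)),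
      DifferentiableAt ℝ M t ∧ (7 * ε / 4) * (M t) ^ 2 - K ≤ deriv M t) :
    MonotoneOn M (Set.Ico 0 T) ∧
    (∀ᵐ t ∂(volume.restrict (Set.Ico 0 T)), (ε / 4) * (M t) ^ 2 ≤ deriv M t) :=
  riccati_propagation_general ε K T hε M hlip hM0 hinit hineq
end

section
/- Consider the two-parameter family with λ = (θ²−1/3)/2, α = p+λ, β = p−1/6+λ, γ = −(3/2)p−1/6−(3/2)λ, δ = −(9/2)p−23/24−(3/2)λ. There exists exactly one pair (p, θ²) with θ² ∈ [0,1] satisfying δ = 3γ and β = −(8/3)γ, namely θ² = 23/36 and p = −77/216, giving α = −11/54, β = −10/27, γ = 5/36, δ = 5/12. -/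
noncomputable def lamOf (θ2 : ℝ) : ℝ := (θ2 - 1 / 3) / 2
noncomputable def alphaOf (p θ2 : ℝ) : ℝ := p + lamOf θ2
noncomputable def betaOf (p θ2 : ℝ) : ℝ := p - 1 / 6 + lamOf θ2
noncomputable def gammaOf (p θ2 : ℝ) : ℝ := -(3 / 2) * p - 1 / 6 - (3 / 2) * lamOf θ2
noncomputable def deltaOf (p θ2 : ℝ) : ℝ := -(9 / 2) * p - 23 / 24 - (3 / 2) * lamOf θ2

/-- In the two-parameter family, the Degasperis-Procesi conditions δ = 3γ and β = -(8/3)γ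
    hold exactly for (p, θ²) = (-77/216, 23/36), giving α = -11/54, β = -10/27,
    γ = 5/36, δ = 5/12. -/
theorem unique_DP_in_two_param_family :
    (∀ p θ2 : ℝ, θ2 ∈ Set.Icc (0 : ℝ) 1 →
      ((deltaOf p θ2 = 3 * gammaOf p θ2 ∧ betaOf p θ2 = -(8 / 3) * gammaOf p θ2) ↔
        (p = -77 / 216 ∧ θ2 = 23 / 36))) ∧
    alphaOf (-77 / 216) (23 / 36) = -11 / 54 ∧
    betaOf (-77 / 216) (23 / 36) = -10 / 27 ∧
    gammaOf (-77 / 216) (23 / 36) = 5 / 36 ∧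
    deltaOf (-77 / 216) (23 / 36) = 5 / 12 := by
  refine ⟨fun p θ2 _ => ?_, ?_, ?_, ?_, ?_⟩ <;>
    simp only [deltaOf, gammaOf, betaOf, alphaOf, lamOf] <;> try norm_num
  constructor
  · rintro ⟨h1, h2⟩
    constructor <;> linarith
  · rintro ⟨rfl, rfl⟩
    norm_num
end

section
/- Let U solve U_t + κ̂·U_x + 3U·U_x − U_txx = 2U_x·U_xx + U·U_xxx with κ̂ ≠ 0, and define u(t,x) = a·U(b(x − vt), ct) with a = 2(1−v)/(ε·κ̂), b² = −1/(βμ), v = α/β, c = (b/κ̂)(1−v), where β < 0, α ≠ β, γ = −β/2, δ = 2γ, ε, μ > 0. Then u solves u_t + u_x + (3/2)ε·u·u_x + μ(α·u_xxx + β·u_xxt) = εμ(γ·u·u_xxx + δ·u_x·u_xx). -/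
open Real

/-- Spatial partial derivative of a function of (time, space). -/
noncomputable def pdx (u : ℝ → ℝ → ℝ) : ℝ → ℝ → ℝ := fun t x => deriv (u t) x

/-- Time partial derivative of a function of (time, space). -/
noncomputable def pdt (u : ℝ → ℝ → ℝ) : ℝ → ℝ → ℝ := fun t x => deriv (fun s => u s x) t

/-- Partial derivative in the second (spatial) coordinate of a two-variable function. -/
noncomputable def DDx (G : ℝ × ℝ → ℝ) : ℝ × ℝ → ℝ := fun p => fderiv ℝ G p (0, 1)

/-- Partial derivative in the first (time) coordinate of a two-variable function. -/
noncomputable def DDt (G : ℝ × ℝ → ℝ) : ℝ × ℝ → ℝ := fun p => fderiv ℝ G p (1, 0)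

lemma DDx_contDiff {G : ℝ × ℝ → ℝ} (hG : ContDiff ℝ (⊤ : ℕ∞) G) : ContDiff ℝ (⊤ : ℕ∞) (DDx G) :=
  (hG.fderiv_right (by simp)).clm_apply contDiff_const

lemma DDt_contDiff {G : ℝ × ℝ → ℝ} (hG : ContDiff ℝ (⊤ : ℕ∞) G) : ContDiff ℝ (⊤ : ℕ∞) (DDt G) :=
  (hG.fderiv_right (by simp)).clm_apply contDiff_const

lemma hasDerivAt_comp_x {G : ℝ × ℝ → ℝ} (hG : ContDiff ℝ (⊤ : ℕ∞) G) (k b c v t x : ℝ) :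
    HasDerivAt (fun y => k * G (c * t, b * (y - v * t)))
      (k * (b * DDx G (c * t, b * (x - v * t)))) x := by
  have hline : HasDerivAt (fun y : ℝ => (c * t, b * (y - v * t))) (((0 : ℝ), b)) x := by
    apply HasDerivAt.prodMk
    · simpa using hasDerivAt_const x (c * t)
    · simpa using (((hasDerivAt_id x).sub_const (v * t)).const_mul b)
  have hG' := (hG.differentiable (by simp) (c * t, b * (x - v * t))).hasFDerivAt
  have h := hG'.comp_hasDerivAt x hline
  have h2 : fderiv ℝ G (c * t, b * (x - v * t)) (0, b)
      = b * DDx G (c * t, b * (x - v * t)) := by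
    have e : ((0 : ℝ), b) = b • (((0 : ℝ), (1 : ℝ))) := by simp
    rw [e, map_smul, smul_eq_mul]; rfl
  simpa [h2, mul_comm] using h.const_mul k

lemma hasDerivAt_comp_t {G : ℝ × ℝ → ℝ} (hG : ContDiff ℝ (⊤ : ℕ∞) G) (k b c v t x : ℝ) :
    HasDerivAt (fun s => k * G (c * s, b * (x - v * s)))
      (k * (c * DDt G (c * t, b * (x - v * t)) - b * v * DDx G (c * t, b * (x - v * t)))) t := by
  have hline : HasDerivAt (fun s : ℝ => (c * s, b * (x - v * s))) ((c, -(b * v))) t := by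
    apply HasDerivAt.prodMk
    · simpa using (hasDerivAt_id t).const_mul c
    · have : HasDerivAt (fun s : ℝ => x - v * s) (-v) t := by
        simpa using ((hasDerivAt_id t).const_mul v).const_sub x
      simpa [mul_comm, mul_assoc] using this.const_mul b
  have hG' := (hG.differentiable (by simp) (c * t, b * (x - v * t))).hasFDerivAt
  have h := hG'.comp_hasDerivAt t hline
  have h2 : fderiv ℝ G (c * t, b * (x - v * t)) (c, -(b * v))
      = c * DDt G (c * t, b * (x - v * t)) - b * v * DDx G (c * t, b * (x - v * t)) := by
    have e : ((c : ℝ), -(b * v)) = c • (((1 : ℝ), (0 : ℝ))) + (-(b * v)) • (((0 : ℝ), (1 : ℝ))) := by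
      simp
    rw [e, map_add, map_smul, map_smul, smul_eq_mul, smul_eq_mul]
    show c * DDt G _ + -(b * v) * DDx G _ = _
    ring
  simpa [h2] using h.const_mul k

lemma pdx_scale {G : ℝ × ℝ → ℝ} (hG : ContDiff ℝ (⊤ : ℕ∞) G) (k b c v : ℝ) {u : ℝ → ℝ → ℝ}
    (hu : ∀ t x, u t x = k * G (c * t, b * (x - v * t))) :
    ∀ t x, pdx u t x = (k * b) * DDx G (c * t, b * (x - v * t)) := by
  intro t x
  have e : u t = fun y => k * G (c * t, b * (y - v * t)) := funext fun y => hu t y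
  show deriv (u t) x = _
  rw [e, (hasDerivAt_comp_x hG k b c v t x).deriv]; ring

lemma pdt_scale {G : ℝ × ℝ → ℝ} (hG : ContDiff ℝ (⊤ : ℕ∞) G) (k b c v : ℝ) {u : ℝ → ℝ → ℝ}
    (hu : ∀ t x, u t x = k * G (c * t, b * (x - v * t))) :
    ∀ t x, pdt u t x = (k * c) * DDt G (c * t, b * (x - v * t))
      + (-(k * (b * v))) * DDx G (c * t, b * (x - v * t)) := by
  intro t x
  have e : (fun s => u s x) = fun s => k * G (c * s, b * (x - v * s)) :=
    funext fun s => hu s x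
  show deriv (fun s => u s x) t = _
  rw [e, (hasDerivAt_comp_t hG k b c v t x).deriv]; ring

lemma pdx_scale2 {f g : ℝ × ℝ → ℝ} (hf : ContDiff ℝ (⊤ : ℕ∞) f) (hg : ContDiff ℝ (⊤ : ℕ∞) g)
    (k1 k2 b c v : ℝ) {u : ℝ → ℝ → ℝ}
    (hu : ∀ t x, u t x = k1 * f (c * t, b * (x - v * t)) + k2 * g (c * t, b * (x - v * t))) :
    ∀ t x, pdx u t x = (k1 * b) * DDx f (c * t, b * (x - v * t))
      + (k2 * b) * DDx g (c * t, b * (x - v * t)) := by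
  intro t x
  have e : u t = fun y => k1 * f (c * t, b * (y - v * t)) + k2 * g (c * t, b * (y - v * t)) :=
    funext fun y => hu t y
  show deriv (u t) x = _
  rw [e, HasDerivAt.deriv (f := fun y => k1 * f (c * t, b * (y - v * t)) + k2 * g (c * t, b * (y - v * t)))
    ((hasDerivAt_comp_x hf k1 b c v t x).add (hasDerivAt_comp_x hg k2 b c v t x))]
  ring

/-- Scaling: if U solves the Camassa-Holm equation
    U_t + κ U_x + 3 U U_x - U_txx = 2 U_x U_xx + U U_xxx, then
    u(t,x) = a U(ct, b(x - vt)), with a = 2(1-v)/(εκ), b = sqrt(-1/(βμ)), v = α/β,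
    c = (b/κ)(1-v), solves the scaled Camassa-Holm family equation
    u_t + u_x + (3/2)ε u u_x + μ(α u_xxx + β u_xxt) = εμ(γ u u_xxx + δ u_x u_xx),
    where β < 0, α ≠ β, γ = -β/2, δ = 2γ. -/
theorem CH_scaling (κ ε μ α β γ δ a b v c : ℝ)
    (hκ : κ ≠ 0) (hε : 0 < ε) (hμ : 0 < μ)
    (hβ : β < 0) (hαβ : α ≠ β) (hγ : γ = -β / 2) (hδ : δ = 2 * γ)
    (hb : b = Real.sqrt (-1 / (β * μ))) (hv : v = α / β)
    (hc : c = (b / κ) * (1 - v)) (ha : a = 2 * (1 - v) / (ε * κ))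
    (U : ℝ → ℝ → ℝ)
    (hU : ContDiff ℝ (⊤ : ℕ∞) (fun p : ℝ × ℝ => U p.1 p.2))
    (hUeq : ∀ t x : ℝ,
      pdt U t x + κ * pdx U t x + 3 * U t x * pdx U t x - pdx (pdx (pdt U)) t x
      = 2 * pdx U t x * pdx (pdx U) t x + U t x * pdx (pdx (pdx U)) t x)
    (u : ℝ → ℝ → ℝ)
    (hu : ∀ t x : ℝ, u t x = a * U (c * t) (b * (x - v * t))) :
    ∀ t x : ℝ,
      pdt u t x + pdx u t x + (3 / 2) * ε * u t x * pdx u t x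
        + μ * (α * pdx (pdx (pdx u)) t x + β * pdx (pdx (pdt u)) t x)
      = ε * μ * (γ * u t x * pdx (pdx (pdx u)) t x + δ * pdx u t x * pdx (pdx u) t x) := by
  intro t x
  set F : ℝ × ℝ → ℝ := fun p => U p.1 p.2 with hF_def
  have hF : ContDiff ℝ (⊤ : ℕ∞) F := hU
  have hF1 : ContDiff ℝ (⊤ : ℕ∞) (DDx F) := DDx_contDiff hF
  have hF2 : ContDiff ℝ (⊤ : ℕ∞) (DDx (DDx F)) := DDx_contDiff hF1
  have hFt : ContDiff ℝ (⊤ : ℕ∞) (DDt F) := DDt_contDiff hF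
  have hFtx : ContDiff ℝ (⊤ : ℕ∞) (DDx (DDt F)) := DDx_contDiff hFt
  -- basic params
  have hβ0 : β ≠ 0 := ne_of_lt hβ
  have hβμ : β * μ < 0 := mul_neg_of_neg_of_pos hβ hμ
  have hb2 : β * μ * b ^ 2 = -1 := by
    have hpos : (0 : ℝ) < -1 / (β * μ) := div_pos_iff.mpr (Or.inr ⟨by norm_num, hβμ⟩)
    have : b ^ 2 = -1 / (β * μ) := by
      rw [hb, sq_sqrt hpos.le]
    rw [this]
    field_simp
  have hcκ : c * κ = b * (1 - v) := by rw [hc]; field_simp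
  have haκ : a * (ε * κ) = 2 * (1 - v) := by rw [ha]; field_simp
  have hβv : β * v = α := by rw [hv]; field_simp
  -- derivatives of U in two-variable form
  have hU0 : ∀ t x, U t x = 1 * F (1 * t, 1 * (x - 0 * t)) := by
    intro t x; simp [hF_def]
  have h1 := pdx_scale hF 1 1 1 0 hU0
  have h2 := pdx_scale hF1 (1 * 1) 1 1 0 h1
  have h3 := pdx_scale hF2 (1 * 1 * 1) 1 1 0 h2
  have ht := pdt_scale hF 1 1 1 0 hU0
  have htx := pdx_scale2 hFt hF1 (1 * 1) (-(1 * (1 * 0))) 1 1 0 ht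
  have htxx := pdx_scale2 hFtx hF2 (1 * 1 * 1) (-(1 * (1 * 0)) * 1) 1 1 0 htx
  -- the CH equation at the rescaled point
  have hw := hUeq (c * t) (b * (x - v * t))
  rw [h1, h2, h3, ht, htxx] at hw
  simp only [one_mul, zero_mul, mul_zero, neg_zero, mul_one, sub_zero, zero_add, add_zero] at hw
  have hFU : U (c * t) (b * (x - v * t)) = F (c * t, b * (x - v * t)) := rfl
  rw [hFU] at hw
  -- derivatives of u
  have hu0 : ∀ t x, u t x = a * F (c * t, b * (x - v * t)) := fun t x => hu t x
  have g1 := pdx_scale hF a b c v hu0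
  have g2 := pdx_scale hF1 (a * b) b c v g1
  have g3 := pdx_scale hF2 (a * b * b) b c v g2
  have gt := pdt_scale hF a b c v hu0
  have gtx := pdx_scale2 hFt hF1 (a * c) (-(a * (b * v))) b c v gt
  have gtxx := pdx_scale2 hFtx hF2 (a * c * b) (-(a * (b * v)) * b) b c v gtx
  rw [hu0 t x, g1, g2, g3, gt t x, gtxx]
  -- coefficient identities
  have hδβ : δ + β = 0 := by linear_combination hδ + 2 * hγ
  have hγβ : γ + β / 2 = 0 := by linear_combination hγ
  have hz3 : κ * ((3 / 2) * ε * a ^ 2 * b + 3 * (μ * β * a * b ^ 2 * c)) = 0 := by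
    linear_combination (3 / 2 * a * b) * haκ + (3 * μ * β * a * b ^ 2) * hcκ
      + (3 * a * b * (1 - v)) * hb2
  have hz3' : (3 / 2) * ε * a ^ 2 * b + 3 * (μ * β * a * b ^ 2 * c) = 0 :=
    (mul_eq_zero.mp hz3).resolve_left hκ
  have hz4 : κ * (-(2 * (μ * β * a * b ^ 2 * c)) - ε * μ * δ * a ^ 2 * b ^ 3) = 0 := by
    linear_combination (-(2 * μ * β * a * b ^ 2)) * hcκ + (-(μ * δ * a * b ^ 3)) * haκ
      + (-2 * (1 - v) * μ * a * b ^ 3) * hδβ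
  have hz4' : -(2 * (μ * β * a * b ^ 2 * c)) - ε * μ * δ * a ^ 2 * b ^ 3 = 0 :=
    (mul_eq_zero.mp hz4).resolve_left hκ
  have hz5 : κ * (-(μ * β * a * b ^ 2 * c) - ε * μ * γ * a ^ 2 * b ^ 3) = 0 := by
    linear_combination (-(μ * β * a * b ^ 2)) * hcκ + (-(μ * γ * a * b ^ 3)) * haκ
      + (-2 * (1 - v) * μ * a * b ^ 3) * hγβ
  have hz5' : -(μ * β * a * b ^ 2 * c) - ε * μ * γ * a ^ 2 * b ^ 3 = 0 :=
    (mul_eq_zero.mp hz5).resolve_left hκ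
  -- final algebra
  linear_combination (-(μ * β * a * c * b ^ 2)) * hw
    + (a * c * DDt F (c * t, b * (x - v * t))) * hb2
    + (μ * β * a * b ^ 2 * DDx F (c * t, b * (x - v * t))) * hcκ
    + (a * b * (1 - v) * DDx F (c * t, b * (x - v * t))) * hb2
    + (F (c * t, b * (x - v * t)) * DDx F (c * t, b * (x - v * t))) * hz3'
    + (DDx F (c * t, b * (x - v * t)) * DDx (DDx F) (c * t, b * (x - v * t))) * hz4'
    + (F (c * t, b * (x - v * t)) * DDx (DDx (DDx F)) (c * t, b * (x - v * t))) * hz5'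
    + (-(μ * a * b ^ 3 * DDx (DDx (DDx F)) (c * t, b * (x - v * t)))) * hβv
end
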